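/- arXiv:1703.10815 — 2 statements merged into one kernel-verified Lean document; each statement's English description precedes it below -/
import Mathlib

section
/- Equivalence of constrained weighted least squares update and minimum-variance linear update: let F ∈ ℂ^{N×r} have orthonormal columns (F*F = I), let V_0 ∈ ℂ^N, Σ_prior = F Σ_x F* with Σ_x Hermitian positive definite, V_prior = F x_prior + V_0, C a measurement matrix, Σ_m Hermitian positive definite, and z a measurement vector. Define K = Σ_prior C* (C Σ_prior C* + Σ_m)⁻¹ and V_post^(a) = V_0 + F(( (F*Σ_prior F)⁻¹ + F*C*Σ_m⁻¹ C F)⁻¹) ((F*Σ_prior F)⁻¹ x_prior + F*C*Σ_m⁻¹ (z - C V_0)). Then V_post^(a) = V_prior + K(z - C V_prior). -/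
open Matrix
open scoped ComplexOrder

/-- Equivalence of the constrained weighted least squares update
(solved in the subspace coordinates) and the minimum-variance linear update. -/
theorem wls_update_eq_minvar_update
    (N M r : ℕ) (F : Matrix (Fin N) (Fin r) ℂ) (hF : Fᴴ * F = 1)
    (V0 : Fin N → ℂ)
    (Sx : Matrix (Fin r) (Fin r) ℂ) (hSx : Sx.PosDef)
    (Sprior : Matrix (Fin N) (Fin N) ℂ) (hSprior : Sprior = F * Sx * Fᴴ)
    (xprior : Fin r → ℂ) (Vprior : Fin N → ℂ)
    (hVprior : Vprior = F.mulVec xprior + V0)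
    (C : Matrix (Fin M) (Fin N) ℂ) (Sm : Matrix (Fin M) (Fin M) ℂ)
    (hSm : Sm.PosDef) (z : Fin M → ℂ)
    -- all inverses are assumed to exist:
    (h1 : IsUnit (Fᴴ * Sprior * F).det)
    (h2 : IsUnit (C * Sprior * Cᴴ + Sm).det)
    (h3 : IsUnit ((Fᴴ * Sprior * F)⁻¹ + Fᴴ * Cᴴ * Sm⁻¹ * C * F).det)
    (K : Matrix (Fin N) (Fin M) ℂ)
    (hK : K = Sprior * Cᴴ * (C * Sprior * Cᴴ + Sm)⁻¹)
    (Vpost : Fin N → ℂ)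
    (hVpost : Vpost = V0 + F.mulVec
      (((Fᴴ * Sprior * F)⁻¹ + Fᴴ * Cᴴ * Sm⁻¹ * C * F)⁻¹.mulVec
        ((Fᴴ * Sprior * F)⁻¹.mulVec xprior +
          (Fᴴ * Cᴴ * Sm⁻¹).mulVec (z - C.mulVec V0)))) :
    Vpost = Vprior + K.mulVec (z - C.mulVec Vprior) := by
  -- Fᴴ * Sprior * F = Sx by orthonormality
  have hSx' : Fᴴ * Sprior * F = Sx := by
    rw [hSprior]
    calc Fᴴ * (F * Sx * Fᴴ) * F = Fᴴ * (F * (Sx * (Fᴴ * F))) := by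
          simp only [Matrix.mul_assoc]
      _ = Sx := by rw [hF, Matrix.mul_one, ← Matrix.mul_assoc, hF, Matrix.one_mul]
  have hSxdet : IsUnit Sx.det := by rw [← hSx']; exact h1
  have hSmdet : IsUnit Sm.det := hSm.det_pos.ne'.isUnit
  rw [hSx'] at h3
  set Q : Matrix (Fin r) (Fin r) ℂ := Sx⁻¹ + Fᴴ * Cᴴ * Sm⁻¹ * C * F with hQ
  set S : Matrix (Fin M) (Fin M) ℂ := C * Sprior * Cᴴ + Sm with hSdef
  -- the cross identity
  have e1 : Q * (Sx * (Fᴴ * Cᴴ)) = Fᴴ * Cᴴ * Sm⁻¹ * S := by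
    rw [hQ, hSdef, hSprior, Matrix.add_mul, Matrix.mul_add,
      Matrix.nonsing_inv_mul_cancel_left _ _ hSxdet]
    have h4 : Fᴴ * Cᴴ * Sm⁻¹ * Sm = Fᴴ * Cᴴ := by
      rw [Matrix.mul_assoc (Fᴴ * Cᴴ), Matrix.nonsing_inv_mul _ hSmdet, Matrix.mul_one]
    rw [h4]
    simp only [Matrix.mul_assoc]
    rw [add_comm]
  have claimA : Q * (Sx * (Fᴴ * Cᴴ) * S⁻¹) = Fᴴ * Cᴴ * Sm⁻¹ := by
    rw [← Matrix.mul_assoc, e1, Matrix.mul_nonsing_inv_cancel_right _ _ h2]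
  have hKalt : K = F * (Sx * (Fᴴ * Cᴴ) * S⁻¹) := by
    rw [hK, hSprior]
    simp only [Matrix.mul_assoc]
  have key2 : F * (Q⁻¹ * (Fᴴ * Cᴴ * Sm⁻¹)) = K := by
    rw [← claimA, Matrix.nonsing_inv_mul_cancel_left _ _ h3, hKalt]
  have key3 : F * (Q⁻¹ * (Fᴴ * Cᴴ * Sm⁻¹ * C)) = K * C := by
    rw [← key2]; simp only [Matrix.mul_assoc]
  have key1 : F * (Q⁻¹ * Sx⁻¹) = F - K * (C * F) := by
    have e2 : Sx⁻¹ = Q - (Fᴴ * Cᴴ * Sm⁻¹) * (C * F) := by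
      rw [hQ, ← Matrix.mul_assoc]; abel
    have e3 : Q⁻¹ * Sx⁻¹ = 1 - Q⁻¹ * (Fᴴ * Cᴴ * Sm⁻¹) * (C * F) := by
      rw [e2, Matrix.mul_sub, Matrix.nonsing_inv_mul _ h3]
      simp only [Matrix.mul_assoc]
    rw [e3, Matrix.mul_sub, Matrix.mul_one, ← key2]
    simp only [Matrix.mul_assoc]
  -- now the vector computation
  rw [hVpost, hVprior, hSx']
  simp only [Matrix.mulVec_add, Matrix.mulVec_sub, Matrix.mulVec_mulVec, ← hQ]
  rw [key1, key2, key3]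
  simp only [Matrix.sub_mulVec, Matrix.mulVec_sub, Matrix.mulVec_add, Matrix.mulVec_mulVec,
    Matrix.mul_assoc]
  abel
end

section
/- If the prior covariance factors as Σ_prior = F Σ_x F* and K = Σ_prior C*(C Σ_prior C* + Σ_m)⁻¹, then the posterior covariance (I - K C)Σ_prior also factors through F, i.e., there exists a Hermitian PSD matrix Σ_x' with (I - K C)Σ_prior = F Σ_x' F*; in particular, the column space of the posterior covariance is contained in the column space of F. -/
open Matrix
open scoped ComplexOrder

/-! With `G = C F` and `A = G Σₓ Gᴴ + Σₘ`, the posterior covariance is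
`F (Σₓ - Σₓ Gᴴ A⁻¹ G Σₓ) Fᴴ`. The middle factor is the Schur complement of the positive definite
block `A` in `[A, G Σₓ; Σₓ Gᴴ, Σₓ] = [G; 1] Σₓ [G; 1]ᴴ + [Σₘ, 0; 0, 0]`, a positive semidefinite
matrix, hence is itself positive semidefinite. -/

namespace Matrix

variable {m n R : Type*} [Fintype m] [Fintype n] [DecidableEq m] [DecidableEq n] [Field R]
  [PartialOrder R] [StarRing R] [StarOrderedRing R]

theorem PosSemidef.fromBlocks_mul_mul_conjTranspose_add {S : Matrix n n R}
    (hS : S.PosSemidef) (G : Matrix m n R) {Sm : Matrix m m R} (hSm : Sm.PosSemidef) :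
    (fromBlocks (G * S * Gᴴ + Sm) (G * S) (G * S)ᴴ S).PosSemidef := by
  have hsplit : fromBlocks (G * S * Gᴴ + Sm) (G * S) (G * S)ᴴ S =
      fromBlocks (G * S * Gᴴ) (G * S) (G * S)ᴴ S + fromBlocks Sm 0 0 0 := by
    simp [fromBlocks_add]
  have hprior :
      fromRows G 1 * S * (fromRows G 1)ᴴ = fromBlocks (G * S * Gᴴ) (G * S) (G * S)ᴴ S := by
    rw [conjTranspose_fromRows_eq_fromCols_conjTranspose, fromRows_mul, fromRows_mul_fromCols]
    simp [hS.isHermitian.eq, Matrix.mul_assoc]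
  have hnoise : fromRows 1 (0 : Matrix n m R) * Sm * (fromRows 1 (0 : Matrix n m R))ᴴ =
      fromBlocks Sm 0 0 0 := by
    rw [conjTranspose_fromRows_eq_fromCols_conjTranspose, fromRows_mul, fromRows_mul_fromCols]
    simp
  rw [hsplit, ← hprior, ← hnoise]
  exact (hS.mul_mul_conjTranspose_same _).add (hSm.mul_mul_conjTranspose_same _)

theorem PosSemidef.sub_conjTranspose_mul_inv_add_mul {S : Matrix n n R} (hS : S.PosSemidef)
    (G : Matrix m n R) {Sm : Matrix m m R} (hSm : Sm.PosDef) :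
    (S - (G * S)ᴴ * (G * S * Gᴴ + Sm)⁻¹ * (G * S)).PosSemidef := by
  have hA : (G * S * Gᴴ + Sm).PosDef := by
    simpa only [Matrix.mul_assoc] using
      PosDef.posSemidef_add (hS.mul_mul_conjTranspose_same G) hSm
  let : Invertible (G * S * Gᴴ + Sm) := hA.isUnit.invertible
  exact (PosDef.fromBlocks₁₁ (G * S) S hA).mp
    (hS.fromBlocks_mul_mul_conjTranspose_add G hSm.posSemidef)

end Matrix

theorem Matrix.range_mulVecLin_mul_le {l m n R : Type*} [Fintype m] [Fintype n] [CommSemiring R]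
    (A : Matrix l m R) (B : Matrix m n R) :
    LinearMap.range (A * B).mulVecLin ≤ LinearMap.range A.mulVecLin := by
  rw [mulVecLin_mul]
  exact LinearMap.range_comp_le_range _ _

theorem posterior_covariance_factors_through_F_general
    (N M r : ℕ) (F : Matrix (Fin N) (Fin r) ℂ)
    (Sx : Matrix (Fin r) (Fin r) ℂ) (hSx : Sx.PosSemidef)
    (Sprior : Matrix (Fin N) (Fin N) ℂ) (hSprior : Sprior = F * Sx * Fᴴ)
    (C : Matrix (Fin M) (Fin N) ℂ)
    (Sm : Matrix (Fin M) (Fin M) ℂ) (hSm : Sm.PosDef)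
    (K : Matrix (Fin N) (Fin M) ℂ)
    (hK : K = Sprior * Cᴴ * (C * Sprior * Cᴴ + Sm)⁻¹) :
    (∃ Sx' : Matrix (Fin r) (Fin r) ℂ, Sx'.PosSemidef ∧
        (1 - K * C) * Sprior = F * Sx' * Fᴴ) ∧
      LinearMap.range ((1 - K * C) * Sprior).mulVecLin ≤
        LinearMap.range F.mulVecLin := by
  subst hSprior hK
  set G := C * F
  have hfactor : (1 - F * Sx * Fᴴ * Cᴴ * (C * (F * Sx * Fᴴ) * Cᴴ + Sm)⁻¹ * C) * (F * Sx * Fᴴ) =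
      F * (Sx - (G * Sx)ᴴ * (G * Sx * Gᴴ + Sm)⁻¹ * (G * Sx)) * Fᴴ := by
    simp only [G, conjTranspose_mul, hSx.isHermitian.eq, Matrix.mul_assoc, Matrix.mul_sub,
      Matrix.sub_mul, Matrix.one_mul]
  refine ⟨⟨_, hSx.sub_conjTranspose_mul_inv_add_mul G hSm, hfactor⟩, ?_⟩
  rw [hfactor, Matrix.mul_assoc]
  exact range_mulVecLin_mul_le _ _

/-- If `Σ_prior = F Σ_x F*` then the posterior covariance
`(I - K C) Σ_prior` also factors through `F` with a Hermitian PSD middle factor;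
in particular its column space is contained in the column space of `F`. -/
theorem posterior_covariance_factors_through_F
    (N M r : ℕ) (F : Matrix (Fin N) (Fin r) ℂ) (hF : Fᴴ * F = 1)
    (Sx : Matrix (Fin r) (Fin r) ℂ) (hSx : Sx.PosSemidef)
    (Sprior : Matrix (Fin N) (Fin N) ℂ) (hSprior : Sprior = F * Sx * Fᴴ)
    (C : Matrix (Fin M) (Fin N) ℂ)
    (Sm : Matrix (Fin M) (Fin M) ℂ) (hSm : Sm.PosDef)
    (hinv : IsUnit (C * Sprior * Cᴴ + Sm).det)
    (K : Matrix (Fin N) (Fin M) ℂ)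
    (hK : K = Sprior * Cᴴ * (C * Sprior * Cᴴ + Sm)⁻¹) :
    (∃ Sx' : Matrix (Fin r) (Fin r) ℂ, Sx'.PosSemidef ∧
        (1 - K * C) * Sprior = F * Sx' * Fᴴ) ∧
      LinearMap.range ((1 - K * C) * Sprior).mulVecLin ≤
        LinearMap.range F.mulVecLin :=
  posterior_covariance_factors_through_F_general N M r F Sx hSx Sprior hSprior C Sm hSm K hK
end
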